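/- arXiv:1906.10465 — 2 statements merged into one kernel-verified Lean document; each statement's English description precedes it below -/
import Mathlib

section
/- Let δ_k, θ_k (1 ≤ k ≤ n) be independent real random variables with E[δ_k] = E[θ_k] = 0 and |δ_k|, |θ_k| ≤ u almost surely. Then for any 0 < δ < 1, with probability at least 1 − δ, |x̂^T ŷ − x^T y| ≤ ‖x∘y‖_2 · √(2 ln(2/δ)) · u(2+u). -/
/-!
The rounding error is `∑ k, x k * y k * ((1 + δ k) * (1 + θ k) - 1)`. Its summands are independent
(each is a function of the pair `(δ k, θ k)`, and these pairs are independent), centred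
(`E[(1 + δ k) * (1 + θ k)] = E[1 + δ k] * E[1 + θ k] = 1`) and bounded by `|x k * y k| * u * (2 + u)`.
By Hoeffding's lemma each summand is sub-Gaussian with variance proxy `(x k * y k * u * (2 + u)) ^ 2`,
so the sum is sub-Gaussian with proxy `c = ‖x ∘ y‖² * (u * (2 + u)) ^ 2`, and the two-sided Chernoff
bound at level `√(2 * c * log (2 / ε))` fails with probability at most `2 * (ε / 2) = ε`.
-/

open MeasureTheory ProbabilityTheory Real
open scoped NNReal

section

variable {Ω : Type*} [MeasurableSpace Ω] {μ : Measure Ω}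

lemma ProbabilityTheory.iIndepFun.prodMk_sumElim {ι β : Type*} [Fintype ι] [MeasurableSpace β]
    {f g : ι → Ω → β} (hf : ∀ i, Measurable (f i)) (hg : ∀ i, Measurable (g i))
    (h : iIndepFun (Sum.elim f g) μ) :
    iIndepFun (fun i ω ↦ (f i ω, g i ω)) μ := by
  have := h.isProbabilityMeasure
  have hfg : ∀ j, Measurable (Sum.elim f g j) := by rintro (i | i) <;> simp [hf, hg]
  rw [iIndepFun_iff_map_fun_eq_pi_map fun i ↦ ((hf i).prodMk (hg i)).aemeasurable]
  have hpair : ∀ i, μ.map (fun ω ↦ (f i ω, g i ω)) = (μ.map (f i)).prod (μ.map (g i)) :=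
    fun i ↦ (h.indepFun Sum.inl_ne_inr).map_prod_eq_prod_map_map (hf i).aemeasurable
      (hg i).aemeasurable
  simp_rw [hpair]
  let e := (MeasurableEquiv.sumPiEquivProdPi fun _ : ι ⊕ ι ↦ β).trans
    (MeasurableEquiv.arrowProdEquivProdArrow β β ι).symm
  have he : MeasurePreserving e (Measure.pi fun j ↦ μ.map (Sum.elim f g j))
      (Measure.pi fun i ↦ (μ.map (f i)).prod (μ.map (g i))) :=
    (measurePreserving_sumPiEquivProdPi_symm _).symm.trans
      (measurePreserving_arrowProdEquivProdArrow β β ι _ _).symm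
  rw [← he.map_eq, ← h.map_fun_eq_pi_map fun j ↦ (hfg j).aemeasurable,
    Measure.map_map e.measurable (measurable_pi_lambda _ hfg)]
  rfl

lemma ProbabilityTheory.hasSubgaussianMGF_of_abs_le_of_integral_eq_zero [IsProbabilityMeasure μ]
    {X : Ω → ℝ} {c : ℝ≥0} (hm : AEMeasurable X μ) (hb : ∀ᵐ ω ∂μ, |X ω| ≤ c)
    (hX : μ[X] = 0) :
    HasSubgaussianMGF X (c ^ 2) μ := by
  have h := hasSubgaussianMGF_of_mem_Icc_of_integral_eq_zero hm
    (hb.mono fun ω hω ↦ abs_le.1 hω) hX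
  have hc : ‖(c : ℝ) - -c‖₊ / 2 = c := by
    ext
    simp [abs_of_nonneg (by positivity : (0 : ℝ) ≤ c + c)]
  rwa [hc] at h

lemma ProbabilityTheory.IndepFun.integral_one_add_mul_one_add_sub_one_eq_zero [IsProbabilityMeasure μ]
    {a b : Ω → ℝ} (hab : IndepFun a b μ) (ha : Integrable a μ) (hb : Integrable b μ)
    (ha0 : μ[a] = 0) (hb0 : μ[b] = 0) :
    ∫ ω, (1 + a ω) * (1 + b ω) - 1 ∂μ = 0 := by
  have hab' : IndepFun (fun ω ↦ 1 + a ω) (fun ω ↦ 1 + b ω) μ :=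
    hab.comp (measurable_const.add measurable_id) (measurable_const.add measurable_id)
  have h1a : Integrable (fun ω ↦ 1 + a ω) μ := (integrable_const 1).add ha
  have h1b : Integrable (fun ω ↦ 1 + b ω) μ := (integrable_const 1).add hb
  have hprod : Integrable (fun ω ↦ (1 + a ω) * (1 + b ω)) μ := hab'.integrable_mul h1a h1b
  rw [integral_sub hprod (integrable_const 1),
    hab'.integral_fun_mul_eq_mul_integral h1a.aestronglyMeasurable h1b.aestronglyMeasurable,
    integral_add (integrable_const 1) ha, integral_add (integrable_const 1) hb, ha0, hb0]
  simp

lemma abs_one_add_mul_one_add_sub_one_le {a b u : ℝ} (ha : |a| ≤ u) (hb : |b| ≤ u) :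
    |(1 + a) * (1 + b) - 1| ≤ u * (2 + u) :=
  calc |(1 + a) * (1 + b) - 1| = |a + b + a * b| := by ring_nf
    _ ≤ |a| + |b| + |a| * |b| := by
      rw [← abs_mul]
      exact (abs_add_le _ _).trans (add_le_add_left (abs_add_le _ _) _)
    _ ≤ u + u + u * u := by gcongr; exact (abs_nonneg a).trans ha
    _ = u * (2 + u) := by ring

lemma ProbabilityTheory.IndepFun.hasSubgaussianMGF_one_add_mul_one_add_sub_one
    [IsProbabilityMeasure μ] {a b : Ω → ℝ} {u : ℝ} (hab : IndepFun a b μ)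
    (ha : Measurable a) (hb : Measurable b) (hau : ∀ᵐ ω ∂μ, |a ω| ≤ u)
    (hbu : ∀ᵐ ω ∂μ, |b ω| ≤ u) (ha0 : μ[a] = 0) (hb0 : μ[b] = 0) :
    HasSubgaussianMGF (fun ω ↦ (1 + a ω) * (1 + b ω) - 1) ((u * (2 + u)).toNNReal ^ 2) μ := by
  refine hasSubgaussianMGF_of_abs_le_of_integral_eq_zero (by fun_prop) ?_
    (hab.integral_one_add_mul_one_add_sub_one_eq_zero
      (.of_bound ha.aestronglyMeasurable u hau) (.of_bound hb.aestronglyMeasurable u hbu) ha0 hb0)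
  filter_upwards [hau, hbu] with ω h₁ h₂
  exact (abs_one_add_mul_one_add_sub_one_le h₁ h₂).trans (Real.le_coe_toNNReal _)

lemma ProbabilityTheory.iIndepFun.hasSubgaussianMGF_sum_mul_one_add_mul_one_add_sub_one
    {ι : Type*} [Fintype ι] {δ θ : ι → Ω → ℝ} {u : ℝ} (hu : 0 ≤ u) (w : ι → ℝ)
    (hδ : ∀ k, Measurable (δ k)) (hθ : ∀ k, Measurable (θ k))
    (hindep : iIndepFun (Sum.elim δ θ) μ)
    (hδ0 : ∀ k, μ[δ k] = 0) (hθ0 : ∀ k, μ[θ k] = 0)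
    (hδu : ∀ k, ∀ᵐ ω ∂μ, |δ k ω| ≤ u) (hθu : ∀ k, ∀ᵐ ω ∂μ, |θ k ω| ≤ u) :
    HasSubgaussianMGF (fun ω ↦ ∑ k, w k * ((1 + δ k ω) * (1 + θ k ω) - 1))
      ((∑ k, w k ^ 2) * (u * (2 + u)) ^ 2).toNNReal μ := by
  have := hindep.isProbabilityMeasure
  have hsum := HasSubgaussianMGF.sum_of_iIndepFun (s := Finset.univ)
    ((hindep.prodMk_sumElim hδ hθ).comp
      (fun k p ↦ w k * ((1 + p.1) * (1 + p.2) - 1)) fun k ↦ by fun_prop)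
    fun k _ ↦ ((hindep.indepFun Sum.inl_ne_inr).hasSubgaussianMGF_one_add_mul_one_add_sub_one
      (hδ k) (hθ k) (hδu k) (hθu k) (hδ0 k) (hθ0 k)).const_mul (w k)
  convert hsum using 1
  · rfl
  rw [← NNReal.coe_inj, Real.coe_toNNReal _ (by positivity), NNReal.coe_sum, Finset.sum_mul]
  refine Finset.sum_congr rfl fun k _ ↦ ?_
  -- `const_mul` states the proxy with the bare subtype term `⟨w k ^ 2, _⟩`, which the
  -- `NNReal` coercion lemmas do not match, so the cast is unfolded by hand.
  show _ = w k ^ 2 * ((u * (2 + u)).toNNReal : ℝ) ^ 2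
  rw [Real.coe_toNNReal _ (by positivity)]

namespace ProbabilityTheory.HasSubgaussianMGF

variable {X : Ω → ℝ} {c : ℝ≥0}

lemma measureReal_abs_ge_le [IsFiniteMeasure μ] (h : HasSubgaussianMGF X c μ) {t : ℝ}
    (ht : 0 ≤ t) :
    μ.real {ω | t ≤ |X ω|} ≤ 2 * exp (-t ^ 2 / (2 * c)) :=
  calc μ.real {ω | t ≤ |X ω|} ≤ μ.real ({ω | t ≤ X ω} ∪ {ω | t ≤ (-X) ω}) :=
        measureReal_mono fun ω (hω : t ≤ |X ω|) ↦ le_abs.1 hω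
    _ ≤ μ.real {ω | t ≤ X ω} + μ.real {ω | t ≤ (-X) ω} := measureReal_union_le _ _
    _ ≤ exp (-t ^ 2 / (2 * c)) + exp (-t ^ 2 / (2 * c)) :=
        add_le_add (h.measure_ge_le ht) (h.neg.measure_ge_le ht)
    _ = 2 * exp (-t ^ 2 / (2 * c)) := by ring

lemma ofReal_one_sub_le_measure_abs_le [IsProbabilityMeasure μ] (h : HasSubgaussianMGF X c μ)
    {ε : ℝ} (hε₀ : 0 < ε) (hε₂ : ε ≤ 2) :
    ENNReal.ofReal (1 - ε) ≤ μ {ω | |X ω| ≤ √(2 * c * log (2 / ε))} := by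
  set t := √(2 * c * log (2 / ε))
  have hlog : 0 ≤ log (2 / ε) := log_nonneg ((one_le_div hε₀).2 hε₂)
  have htail : μ {ω | |X ω| ≤ t}ᶜ ≤ ENNReal.ofReal ε := by
    rcases eq_zero_or_pos c with rfl | hc
    · have hX : ∀ᵐ ω ∂μ, ω ∉ {ω | |X ω| ≤ t}ᶜ := by
        filter_upwards [h.ae_eq_zero_of_hasSubgaussianMGF_zero] with ω hω
        simp [t, hω]
      simp [measure_eq_zero_iff_ae_notMem.2 hX]
    rw [← ofReal_measureReal]
    refine ENNReal.ofReal_le_ofReal ?_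
    calc μ.real {ω | |X ω| ≤ t}ᶜ ≤ μ.real {ω | t ≤ |X ω|} :=
          measureReal_mono fun ω (hω : ¬|X ω| ≤ t) ↦ (not_le.1 hω).le
      _ ≤ 2 * exp (-t ^ 2 / (2 * c)) := h.measureReal_abs_ge_le (sqrt_nonneg _)
      _ = ε := by
          have hexponent : -(2 * c * log (2 / ε)) / (2 * c) = -log (2 / ε) := by field_simp
          rw [sq_sqrt (by positivity), hexponent, exp_neg, exp_log (by positivity)]
          field_simp
  rw [ENNReal.ofReal_sub _ hε₀.le, ENNReal.ofReal_one, tsub_le_iff_right, ← measure_univ (μ := μ)]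
  exact (measure_univ_le_add_compl _).trans (add_le_add le_rfl htail)

end ProbabilityTheory.HasSubgaussianMGF

end

theorem probabilistic_perturbation_bound
    {Ω : Type*} [MeasurableSpace Ω] (μ : Measure Ω) [IsProbabilityMeasure μ]
    (n : ℕ) (x y : Fin n → ℝ) (u : ℝ) (hu : 0 < u)
    (δ θ : Fin n → Ω → ℝ)
    (hmeasδ : ∀ k, Measurable (δ k)) (hmeasθ : ∀ k, Measurable (θ k))
    (hindep : iIndepFun
      (Sum.elim δ θ : Fin n ⊕ Fin n → Ω → ℝ) μ)
    (hmeanδ : ∀ k, ∫ ω, δ k ω ∂μ = 0) (hmeanθ : ∀ k, ∫ ω, θ k ω ∂μ = 0)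
    (hbddδ : ∀ k, ∀ᵐ ω ∂μ, |δ k ω| ≤ u) (hbddθ : ∀ k, ∀ᵐ ω ∂μ, |θ k ω| ≤ u)
    (ε : ℝ) (hε0 : 0 < ε) (hε1 : ε < 1) :
    ENNReal.ofReal (1 - ε) ≤
      μ {ω | |(∑ k, ((1 + δ k ω) * x k) * ((1 + θ k ω) * y k)) - ∑ k, x k * y k| ≤
        Real.sqrt (∑ k, (x k * y k) ^ 2) * Real.sqrt (2 * Real.log (2 / ε)) *
          (u * (2 + u))} := by
  have hsum := hindep.hasSubgaussianMGF_sum_mul_one_add_mul_one_add_sub_one hu.le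
    (fun k ↦ x k * y k) hmeasδ hmeasθ hmeanδ hmeanθ hbddδ hbddθ
  have hdev : ∀ ω, (∑ k, ((1 + δ k ω) * x k) * ((1 + θ k ω) * y k)) - ∑ k, x k * y k =
      ∑ k, x k * y k * ((1 + δ k ω) * (1 + θ k ω) - 1) := fun ω ↦ by
    rw [← Finset.sum_sub_distrib]
    exact Finset.sum_congr rfl fun k _ ↦ by ring
  have hradius : √(∑ k, (x k * y k) ^ 2) * √(2 * log (2 / ε)) * (u * (2 + u)) =
      √(2 * ((∑ k, (x k * y k) ^ 2) * (u * (2 + u)) ^ 2).toNNReal * log (2 / ε)) := by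
    have hnorm : 0 ≤ ∑ k, (x k * y k) ^ 2 := by positivity
    have hlog : 0 ≤ 2 * log (2 / ε) :=
      mul_nonneg zero_le_two (log_nonneg ((one_le_div hε0).2 (by linarith)))
    rw [Real.coe_toNNReal _ (by positivity), show 2 * ((∑ k, (x k * y k) ^ 2) * (u * (2 + u)) ^ 2) *
        log (2 / ε) = (∑ k, (x k * y k) ^ 2) * (2 * log (2 / ε)) * (u * (2 + u)) ^ 2 by ring,
      sqrt_mul (mul_nonneg hnorm hlog), sqrt_mul hnorm, sqrt_sq (by positivity)]
  simp_rw [hdev, hradius]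
  exact hsum.ofReal_one_sub_le_measure_abs_le hε0 (by linarith)
end

section
/- In the step-by-step roundoff model with |δ_j| ≤ u for 1 ≤ j ≤ 2n−1, the total forward error satisfies |ŝ_{2n} − x^T y| ≤ √(2n−1) · √(Σ_{k=1}^{2n−1} c_k²) · u, where c_{2k−1} = |x_1y_1|(1+u)^{k−1} + Σ_{j=2}^k |x_j y_j|(1+u)^{k−j+1} and c_{2k−2} = |x_k y_k|. -/
/-!
Each rounding multiplies a quantity `v_j` by `1 + δ_j`, so it adds the local error `v_j δ_j`,
where `v_{2k-2} = x_k y_k` and `v_{2k-1} = ŝ_{2k-1}`. By induction `|ŝ_{2k-1}| ≤ c_{2k-1}`, since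
the running-sum bound obeys `c_{2k+1} = (c_{2k-1} + |x_{k+1} y_{k+1}|)(1 + u)`; hence the total
error is at most `u ∑ c_j`, and Cauchy–Schwarz on the `2n - 1` terms gives the square-root bound.
-/

open Finset

lemma Finset.sum_le_sqrt_card_mul_sqrt_sum_sq {ι : Type*} (s : Finset ι) (f : ι → ℝ) :
    ∑ i ∈ s, f i ≤ √(#s : ℝ) * √(∑ i ∈ s, f i ^ 2) := by
  rw [← Real.sqrt_mul (Nat.cast_nonneg _)]
  exact Real.le_sqrt_of_sq_le sq_sum_le_card_mul_sum_sq

lemma abs_mul_le_mul_of_abs_le {a b d e : ℝ} (ha : |a| ≤ b) (hd : |d| ≤ e) :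
    |a * d| ≤ b * e := by
  rw [abs_mul]
  exact mul_le_mul ha hd (abs_nonneg d) ((abs_nonneg a).trans ha)

lemma abs_one_add_le_one_add {δ u : ℝ} (h : |δ| ≤ u) : |1 + δ| ≤ 1 + u := by
  have := abs_add_le 1 δ
  rw [abs_one] at this
  linarith

/-- The paper's `c_{2k-1}`, with `a j = |x_j y_j|` and `r = 1 + u`. -/
def runningSumBound (a : ℕ → ℝ) (r : ℝ) (k : ℕ) : ℝ :=
  a 1 * r ^ (k - 1) + ∑ j ∈ Icc 2 k, a j * r ^ (k - j + 1)

lemma runningSumBound_one (a : ℕ → ℝ) (r : ℝ) : runningSumBound a r 1 = a 1 := by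
  simp [runningSumBound]

lemma runningSumBound_succ (a : ℕ → ℝ) (r : ℝ) {k : ℕ} (hk : 1 ≤ k) :
    runningSumBound a r (k + 1) = (runningSumBound a r k + a (k + 1)) * r := by
  have hlead : r ^ (k + 1 - 1) = r ^ (k - 1) * r := by
    rw [← pow_succ]; congr 1; omega
  have hterm : ∀ j ∈ Icc 2 k, a j * r ^ (k + 1 - j + 1) = a j * r ^ (k - j + 1) * r := by
    intro j hj
    rw [mul_assoc, ← pow_succ]
    congr 2
    have := (mem_Icc.mp hj).2
    omega
  simp only [runningSumBound]
  rw [sum_Icc_succ_top (by omega), sum_congr rfl hterm, hlead, ← sum_mul,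
    show k + 1 - (k + 1) + 1 = 1 by omega, pow_one]
  ring

section StepwiseModel

variable {n : ℕ} {x y δ shat : ℕ → ℝ} {u : ℝ}

lemma abs_shat_odd_le_runningSumBound
    (hδ : ∀ j, 1 ≤ j → j ≤ 2 * n - 1 → |δ j| ≤ u)
    (hs1 : shat 1 = x 1 * y 1)
    (hsodd : ∀ k, 2 ≤ k → k ≤ n →
      shat (2 * k - 1) = shat (2 * k - 2) + x k * y k * (1 + δ (2 * k - 2)))
    (hseven : ∀ k, 1 ≤ k → k ≤ n → shat (2 * k) = shat (2 * k - 1) * (1 + δ (2 * k - 1))) :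
    ∀ k, 1 ≤ k → k ≤ n →
      |shat (2 * k - 1)| ≤ runningSumBound (fun j => |x j * y j|) (1 + u) k := by
  intro k hk
  induction k, hk using Nat.le_induction with
  | base =>
    intro _
    simp [runningSumBound_one, hs1]
  | succ k hk ih =>
    intro hkn
    have hodd : shat (2 * (k + 1) - 1) =
        shat (2 * k) + x (k + 1) * y (k + 1) * (1 + δ (2 * k)) := by
      have := hsodd (k + 1) (by omega) hkn
      rwa [show 2 * (k + 1) - 2 = 2 * k by omega] at this
    have hrounded :
        |shat (2 * k)| ≤ runningSumBound (fun j => |x j * y j|) (1 + u) k * (1 + u) := by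
      rw [hseven k hk (by omega)]
      exact abs_mul_le_mul_of_abs_le (ih (by omega))
        (abs_one_add_le_one_add (hδ _ (by omega) (by omega)))
    have hterm : |x (k + 1) * y (k + 1) * (1 + δ (2 * k))| ≤ |x (k + 1) * y (k + 1)| * (1 + u) :=
      abs_mul_le_mul_of_abs_le le_rfl (abs_one_add_le_one_add (hδ _ (by omega) (by omega)))
    rw [hodd, runningSumBound_succ _ _ hk, add_mul]
    exact (abs_add_le _ _).trans (add_le_add hrounded hterm)

lemma abs_shat_even_sub_sum_le {c : ℕ → ℝ}
    (hδ : ∀ j, 1 ≤ j → j ≤ 2 * n - 1 → |δ j| ≤ u)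
    (hs1 : shat 1 = x 1 * y 1)
    (hsodd : ∀ k, 2 ≤ k → k ≤ n →
      shat (2 * k - 1) = shat (2 * k - 2) + x k * y k * (1 + δ (2 * k - 2)))
    (hseven : ∀ k, 1 ≤ k → k ≤ n → shat (2 * k) = shat (2 * k - 1) * (1 + δ (2 * k - 1)))
    (hodd_le : ∀ k, 1 ≤ k → k ≤ n → |shat (2 * k - 1)| ≤ c (2 * k - 1))
    (hceven : ∀ k, 2 ≤ k → k ≤ n → c (2 * k - 2) = |x k * y k|) :
    ∀ m, 1 ≤ m → m ≤ n →
      |shat (2 * m) - ∑ k ∈ Icc 1 m, x k * y k| ≤ (∑ k ∈ Icc 1 (2 * m - 1), c k) * u := by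
  intro m hm
  induction m, hm using Nat.le_induction with
  | base =>
    intro hn
    have hfirst : shat 2 - x 1 * y 1 = shat 1 * δ 1 := by
      rw [hseven 1 le_rfl hn, hs1]; ring
    simpa [hfirst] using
      abs_mul_le_mul_of_abs_le (hodd_le 1 le_rfl hn) (hδ 1 le_rfl (by omega))
  | succ m hm ih =>
    intro hmn
    have hodd : shat (2 * m + 1) = shat (2 * m) + x (m + 1) * y (m + 1) * (1 + δ (2 * m)) := by
      have := hsodd (m + 1) (by omega) hmn
      rwa [show 2 * (m + 1) - 2 = 2 * m by omega,
        show 2 * (m + 1) - 1 = 2 * m + 1 by omega] at this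
    have heven : shat (2 * m + 2) = shat (2 * m + 1) * (1 + δ (2 * m + 1)) :=
      hseven (m + 1) (by omega) hmn
    have hsplit : shat (2 * m + 2) - ∑ k ∈ Icc 1 (m + 1), x k * y k =
        (shat (2 * m) - ∑ k ∈ Icc 1 m, x k * y k) + x (m + 1) * y (m + 1) * δ (2 * m)
          + shat (2 * m + 1) * δ (2 * m + 1) := by
      rw [sum_Icc_succ_top (by omega), heven, hodd]; ring
    have hpair : ∑ k ∈ Icc 1 (2 * m + 1), c k =
        ∑ k ∈ Icc 1 (2 * m - 1), c k + c (2 * m) + c (2 * m + 1) := by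
      rw [sum_Icc_succ_top (by omega), show 2 * m = 2 * m - 1 + 1 by omega,
        sum_Icc_succ_top (by omega), Nat.add_sub_cancel]
    have hproduct : |x (m + 1) * y (m + 1) * δ (2 * m)| ≤ c (2 * m) * u := by
      have := hceven (m + 1) (by omega) hmn
      rw [show 2 * (m + 1) - 2 = 2 * m by omega] at this
      exact abs_mul_le_mul_of_abs_le this.ge (hδ _ (by omega) (by omega))
    have hrounding : |shat (2 * m + 1) * δ (2 * m + 1)| ≤ c (2 * m + 1) * u := by
      have := hodd_le (m + 1) (by omega) hmn
      rw [show 2 * (m + 1) - 1 = 2 * m + 1 by omega] at this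
      exact abs_mul_le_mul_of_abs_le this (hδ _ (by omega) (by omega))
    rw [show 2 * (m + 1) = 2 * m + 2 by ring, show 2 * m + 2 - 1 = 2 * m + 1 by omega,
      hsplit, hpair]
    calc _ ≤ |shat (2 * m) - ∑ k ∈ Icc 1 m, x k * y k| + |x (m + 1) * y (m + 1) * δ (2 * m)|
            + |shat (2 * m + 1) * δ (2 * m + 1)| := abs_add_three _ _ _
      _ ≤ (∑ k ∈ Icc 1 (2 * m - 1), c k) * u + c (2 * m) * u + c (2 * m + 1) * u := by
            gcongr; exact ih (by omega)
      _ = _ := by ring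

end StepwiseModel

theorem stepwise_model_forward_error_bound_general (n : ℕ) (hn : 1 ≤ n)
    (x y δ : ℕ → ℝ) (u : ℝ)
    (hδ : ∀ j, 1 ≤ j → j ≤ 2 * n - 1 → |δ j| ≤ u)
    (shat : ℕ → ℝ)
    (hs1 : shat 1 = x 1 * y 1)
    (hsodd : ∀ k, 2 ≤ k → k ≤ n →
      shat (2 * k - 1) = shat (2 * k - 2) + x k * y k * (1 + δ (2 * k - 2)))
    (hseven : ∀ k, 1 ≤ k → k ≤ n → shat (2 * k) = shat (2 * k - 1) * (1 + δ (2 * k - 1)))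
    (c : ℕ → ℝ)
    (hcodd : ∀ k, 1 ≤ k → k ≤ n →
      c (2 * k - 1) = |x 1 * y 1| * (1 + u) ^ (k - 1) +
        ∑ j ∈ Finset.Icc 2 k, |x j * y j| * (1 + u) ^ (k - j + 1))
    (hceven : ∀ k, 2 ≤ k → k ≤ n → c (2 * k - 2) = |x k * y k|) :
    |shat (2 * n) - ∑ k ∈ Finset.Icc 1 n, x k * y k| ≤
      Real.sqrt (2 * n - 1) *
        Real.sqrt (∑ k ∈ Finset.Icc 1 (2 * n - 1), (c k) ^ 2) * u := by
  have hu : 0 ≤ u := (abs_nonneg _).trans (hδ 1 le_rfl (by omega))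
  have hodd_le : ∀ k, 1 ≤ k → k ≤ n → |shat (2 * k - 1)| ≤ c (2 * k - 1) :=
    fun k hk hkn =>
      (hcodd k hk hkn).symm ▸ abs_shat_odd_le_runningSumBound hδ hs1 hsodd hseven k hk hkn
  have hcard : ((#(Icc 1 (2 * n - 1)) : ℕ) : ℝ) = 2 * n - 1 := by
    rw [Nat.card_Icc, Nat.add_sub_cancel, Nat.cast_sub (by omega)]
    push_cast; ring
  calc _ ≤ (∑ k ∈ Icc 1 (2 * n - 1), c k) * u :=
        abs_shat_even_sub_sum_le hδ hs1 hsodd hseven hodd_le hceven n hn le_rfl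
    _ ≤ _ := by
        gcongr
        rw [← hcard]
        exact sum_le_sqrt_card_mul_sqrt_sum_sq _ c

theorem stepwise_model_forward_error_bound (n : ℕ) (hn : 1 ≤ n)
    (x y δ : ℕ → ℝ) (u : ℝ) (hu : 0 < u)
    (hδ : ∀ j, 1 ≤ j → j ≤ 2 * n - 1 → |δ j| ≤ u)
    (shat : ℕ → ℝ)
    (hs1 : shat 1 = x 1 * y 1)
    (hsodd : ∀ k, 2 ≤ k → k ≤ n →
      shat (2 * k - 1) = shat (2 * k - 2) + x k * y k * (1 + δ (2 * k - 2)))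
    (hseven : ∀ k, 1 ≤ k → k ≤ n → shat (2 * k) = shat (2 * k - 1) * (1 + δ (2 * k - 1)))
    (c : ℕ → ℝ)
    (hcodd : ∀ k, 1 ≤ k → k ≤ n →
      c (2 * k - 1) = |x 1 * y 1| * (1 + u) ^ (k - 1) +
        ∑ j ∈ Finset.Icc 2 k, |x j * y j| * (1 + u) ^ (k - j + 1))
    (hceven : ∀ k, 2 ≤ k → k ≤ n → c (2 * k - 2) = |x k * y k|) :
    |shat (2 * n) - ∑ k ∈ Finset.Icc 1 n, x k * y k| ≤
      Real.sqrt (2 * n - 1) *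
        Real.sqrt (∑ k ∈ Finset.Icc 1 (2 * n - 1), (c k) ^ 2) * u :=
  stepwise_model_forward_error_bound_general n hn x y δ u hδ shat hs1 hsodd hseven c hcodd hceven
end
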